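/- Let A, B ∈ M_n be positive semidefinite with B ≤ A, and let f : [0,∞) → [0,∞) be a concave function. Then for every unitarily invariant norm ‖·‖, one has ‖f(B)‖ ≤ ‖f(A)‖, where f is applied via functional calculus. -/

import Mathlib

open Matrix Set ComplexOrder

variable {m : Type*}

/-- Square root of a positive semidefinite matrix (as in the older Mathlib). -/
noncomputable def Matrix.PosSemidef.sqrt {n 𝕜 : Type*} [Fintype n] [DecidableEq n] [RCLike 𝕜]
    {A : Matrix n n 𝕜} (hA : A.PosSemidef) : Matrix n n 𝕜 :=
  hA.1.eigenvectorUnitary.1 * diagonal ((↑) ∘ (√·) ∘ hA.1.eigenvalues) *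
    (star hA.1.eigenvectorUnitary : Matrix n n 𝕜)

theorem Matrix.PosSemidef.posSemidef_sqrt {n 𝕜 : Type*} [Fintype n] [DecidableEq n] [RCLike 𝕜]
    {A : Matrix n n 𝕜} (hA : A.PosSemidef) : hA.sqrt.PosSemidef := by
  have hd : (diagonal ((↑) ∘ (√·) ∘ hA.1.eigenvalues) : Matrix n n 𝕜).PosSemidef :=
    PosSemidef.diagonal (fun i => by simp [Function.comp])
  simpa [Matrix.PosSemidef.sqrt, ← Matrix.star_eq_conjTranspose] using
    hd.mul_mul_conjTranspose_same (hA.1.eigenvectorUnitary : Matrix n n 𝕜)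

/-- The modulus `|X| = (XᴴX)^{1/2}` of a matrix. -/
noncomputable def matAbs [Fintype m] [DecidableEq m] (X : Matrix m m ℂ) : Matrix m m ℂ :=
  Matrix.PosSemidef.sqrt (Matrix.posSemidef_conjTranspose_mul_self X)

theorem matAbs_posSemidef [Fintype m] [DecidableEq m] (X : Matrix m m ℂ) :
    (matAbs X).PosSemidef :=
  Matrix.PosSemidef.posSemidef_sqrt (Matrix.posSemidef_conjTranspose_mul_self X)

/-- Functional calculus: apply `f : ℝ → ℝ` to a Hermitian matrix via its spectral
decomposition (junk value `0` for non-Hermitian input). -/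
noncomputable def matFun [Fintype m] [DecidableEq m] (f : ℝ → ℝ) (X : Matrix m m ℂ) :
    Matrix m m ℂ :=
  if h : X.IsHermitian then
    (h.eigenvectorUnitary : Matrix m m ℂ) *
      Matrix.diagonal (fun i => (f (h.eigenvalues i) : ℂ)) *
      star (h.eigenvectorUnitary : Matrix m m ℂ)
  else 0

/-- Real part `Re A = (A + Aᴴ)/2`. -/
noncomputable def reM (A : Matrix m m ℂ) : Matrix m m ℂ := (1/2 : ℂ) • (A + Aᴴ)

/-- Imaginary part `Im A = (A - Aᴴ)/(2i)`. -/
noncomputable def imM (A : Matrix m m ℂ) : Matrix m m ℂ := (1/(2*Complex.I)) • (A - Aᴴ)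

/-- Numerical range `W(A) = {x* A x : x*x = 1}`. -/
def numRange [Fintype m] (A : Matrix m m ℂ) : Set ℂ :=
  {z | ∃ x : m → ℂ, star x ⬝ᵥ x = 1 ∧ z = star x ⬝ᵥ A.mulVec x}

/-- The sector `S_α = {z : Re z ≥ 0, |Im z| ≤ (Re z) tan α}`. -/
def sector (α : ℝ) : Set ℂ := {z | 0 ≤ z.re ∧ |z.im| ≤ z.re * Real.tan α}


/-!
For increasingly sorted eigenvalues, Weyl's monotonicity principle gives `λₖ(B) ≤ λₖ(A)`: a
dimension count yields a nonzero vector in the span of the eigenvectors of `A` for `λ₁(A), …, λₖ(A)`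
and of those of `B` for `λₖ(B), …, λₙ(B)`, on which `⟨Bx, x⟩ ≤ ⟨Ax, x⟩` compares the two.
A nonnegative concave function on `[0, ∞)` is nondecreasing, so `0 ≤ f(λₖ(B)) ≤ f(λₖ(A))`.
A unitarily invariant norm sees `f(X)` only through the diagonal matrix of the `f(λₖ(X))`, and on
diagonal matrices it is monotone in the absolute values of the entries: raising one entry from
`μ` to `b ≥ |μ|` writes the old matrix as a convex combination of the new one and its sign flip at
that entry, which is a unitary multiple of it.
-/

theorem ConcaveOn.monotoneOn_of_nonneg {𝕜 : Type*} [Field 𝕜] [LinearOrder 𝕜] [IsStrictOrderedRing 𝕜]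
    {f : 𝕜 → 𝕜} {a : 𝕜} (hf : ConcaveOn 𝕜 (Ici a) f) (hf0 : ∀ x, a ≤ x → 0 ≤ f x) :
    MonotoneOn f (Ici a) := by
  intro x hx y hy hxy
  rcases hxy.eq_or_lt with rfl | hxy
  · rfl
  by_contra! hyx
  set s := (f y - f x) / (y - x)
  have hs_neg : s < 0 := div_neg_of_neg_of_pos (sub_neg.2 hyx) (sub_pos.2 hxy)
  -- far enough to the right, the secant through `x` and `y` drops below `0`
  set z := y + f y / -s + 1 with hz
  have hyz : y < z := by
    have : 0 ≤ f y / -s := div_nonneg (hf0 y hy) (neg_nonneg.2 hs_neg.le)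
    linarith
  have hz_mem : z ∈ Ici a := le_trans hy hyz.le
  have hslope := hf.slope_anti_adjacent hx hz_mem hxy hyz
  rw [div_le_iff₀ (sub_pos.2 hyz)] at hslope
  have hsz : s * (z - y) = -f y + s := by
    rw [hz]
    field_simp [hs_neg.ne]
    ring
  linarith [hf0 z hz_mem]

namespace Seminorm

variable {ι 𝕜 : Type*} [Fintype ι] [DecidableEq ι] [RCLike 𝕜]

def IsUnitarilyInvariant (p : Seminorm 𝕜 (Matrix ι ι 𝕜)) : Prop :=
  ∀ X, ∀ U ∈ unitaryGroup ι 𝕜, ∀ V ∈ unitaryGroup ι 𝕜, p (U * X * V) = p X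

namespace IsUnitarilyInvariant

variable {p : Seminorm 𝕜 (Matrix ι ι 𝕜)}

theorem map_conj_star (hp : p.IsUnitarilyInvariant) (X : Matrix ι ι 𝕜) {U : Matrix ι ι 𝕜}
    (hU : U ∈ unitaryGroup ι 𝕜) : p (U * X * star U) = p X :=
  hp X U hU (star U) (Unitary.star_mem hU)

theorem map_diagonal_comp_perm (hp : p.IsUnitarilyInvariant) (d : ι → 𝕜) (σ : Equiv.Perm ι) :
    p (diagonal (d ∘ σ)) = p (diagonal d) := by
  have hσ : σ.permMatrix 𝕜 ∈ unitaryGroup ι 𝕜 := by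
    rw [mem_unitaryGroup_iff', star_eq_conjTranspose, conjTranspose_permMatrix, ← permMatrix_mul,
      mul_inv_cancel, permMatrix_one]
  rw [← hp.map_conj_star (diagonal d) hσ, star_eq_conjTranspose, conjTranspose_permMatrix]
  congr 1
  ext i j
  simp [PEquiv.toMatrix_toPEquiv_mul, PEquiv.mul_toMatrix_toPEquiv, diagonal_apply,
    Equiv.Perm.inv_def]

theorem map_diagonal_update_le (hp : p.IsUnitarilyInvariant) (μ : ι → ℝ) {j : ι} {b : ℝ}
    (hb : |μ j| ≤ b) :
    p (diagonal fun i ↦ (μ i : 𝕜)) ≤ p (diagonal fun i ↦ (Function.update μ j b i : 𝕜)) := by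
  rcases (abs_nonneg _).trans hb |>.eq_or_lt with rfl | hb0
  · rw [Function.update_eq_self_iff.2 (abs_nonpos_iff.1 hb).symm]
  set Dp : Matrix ι ι 𝕜 := diagonal fun i ↦ (Function.update μ j b i : 𝕜)
  set Dm : Matrix ι ι 𝕜 := diagonal fun i ↦ (Function.update μ j (-b) i : 𝕜)
  set E : Matrix ι ι 𝕜 := diagonal (Function.update 1 j (-1))
  set s : ℝ := (b + μ j) / (2 * b)
  have hs0 : 0 ≤ s := div_nonneg (by linarith [neg_abs_le (μ j)]) (by linarith)
  have hs1 : s ≤ 1 := (div_le_one (by linarith)).2 (by linarith [le_abs_self (μ j)])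
  have hE : E ∈ unitaryGroup ι 𝕜 := by
    rw [mem_unitaryGroup_iff, star_eq_conjTranspose, diagonal_conjTranspose, diagonal_mul_diagonal,
      ← diagonal_one]
    congr 1
    ext i
    rcases eq_or_ne i j with rfl | h <;> simp [Function.update_of_ne, *]
  have hDm : Dm = E * Dp * 1 := by
    simp only [Dm, Dp, E, mul_one, diagonal_mul_diagonal]
    congr 1
    ext i
    rcases eq_or_ne i j with rfl | h <;> simp [Function.update_of_ne, *]
  have hμ_real (i : ι) :
      μ i = s * Function.update μ j b i + (1 - s) * Function.update μ j (-b) i := by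
    rcases eq_or_ne i j with rfl | h
    · simp only [Function.update_self, s]
      field_simp
      ring
    · simp only [Function.update_of_ne h]
      ring
  have hμ : (diagonal fun i ↦ (μ i : 𝕜)) = (s : 𝕜) • Dp + ((1 - s : ℝ) : 𝕜) • Dm := by
    simp only [Dp, Dm, ← diagonal_smul, diagonal_add]
    congr 1
    ext i
    rw [hμ_real i]
    simp
  calc p (diagonal fun i ↦ (μ i : 𝕜))
      ≤ p ((s : 𝕜) • Dp) + p (((1 - s : ℝ) : 𝕜) • Dm) := hμ ▸ map_add_le_add p _ _
    _ = s * p Dp + (1 - s) * p Dm := by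
      rw [map_smul_eq_mul, map_smul_eq_mul, RCLike.norm_of_nonneg hs0,
        RCLike.norm_of_nonneg (sub_nonneg.2 hs1)]
    _ = p Dp := by rw [hDm, hp _ _ hE _ (one_mem _)]; ring

theorem map_diagonal_le_of_abs_le (hp : p.IsUnitarilyInvariant) {μ ν : ι → ℝ}
    (h : ∀ i, |μ i| ≤ ν i) :
    p (diagonal fun i ↦ (μ i : 𝕜)) ≤ p (diagonal fun i ↦ (ν i : 𝕜)) := by
  suffices ∀ s : Finset ι, p (diagonal fun i ↦ (μ i : 𝕜)) ≤
      p (diagonal fun i ↦ (s.piecewise ν μ i : 𝕜)) by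
    simpa using this Finset.univ
  intro s
  induction s using Finset.induction_on with
  | empty => simp
  | insert j s hj ih =>
    rw [Finset.piecewise_insert]
    refine ih.trans (hp.map_diagonal_update_le _ ?_)
    rw [Finset.piecewise_eq_of_notMem _ _ _ hj]
    exact h j

end IsUnitarilyInvariant

end Seminorm

theorem Matrix.exists_ne_zero_mulVec_apply_eq_zero_of_notMem {K ι : Type*} [Field K] [Fintype ι]
    (P Q : Matrix ι ι K) {S T : Finset ι} (hST : Fintype.card ι < S.card + T.card) :
    ∃ x ≠ 0, (∀ i ∉ S, (P *ᵥ x) i = 0) ∧ (∀ i ∉ T, (Q *ᵥ x) i = 0) := by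
  classical
  let L : (ι → K) →ₗ[K] ({i // i ∉ S} → K) × ({i // i ∉ T} → K) :=
    (LinearMap.funLeft K K Subtype.val ∘ₗ P.mulVecLin).prod
      (LinearMap.funLeft K K Subtype.val ∘ₗ Q.mulVecLin)
  have hL : Module.finrank K (({i // i ∉ S} → K) × ({i // i ∉ T} → K)) <
      Module.finrank K (ι → K) := by
    simp only [Module.finrank_prod, Module.finrank_fintype_fun_eq_card, Fintype.card_subtype_compl,
      Fintype.card_coe]
    have := S.card_le_univ
    have := T.card_le_univ
    omega
  obtain ⟨x, hx, hx0⟩ :=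
    Submodule.ne_bot_iff _ |>.1 (LinearMap.ker_ne_bot_of_finrank_lt (f := L) hL)
  simp only [L, LinearMap.ker_prod, Submodule.mem_inf, LinearMap.mem_ker, LinearMap.coe_comp,
    Function.comp_apply, funext_iff, LinearMap.funLeft_apply, Pi.zero_apply, Subtype.forall] at hx
  exact ⟨x, hx0, hx⟩

namespace Matrix

variable {ι 𝕜 : Type*} [Fintype ι] [RCLike 𝕜]

theorem star_dotProduct_self_eq_sum_norm_sq (v : ι → 𝕜) :
    star v ⬝ᵥ v = ((∑ i, ‖v i‖ ^ 2 : ℝ) : 𝕜) := by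
  simp [dotProduct, RCLike.conj_mul]

variable [DecidableEq ι]

theorem star_dotProduct_self_star_mulVec {U : Matrix ι ι 𝕜} (hU : U ∈ unitaryGroup ι 𝕜)
    (x : ι → 𝕜) : star (star U *ᵥ x) ⬝ᵥ (star U *ᵥ x) = star x ⬝ᵥ x := by
  rw [star_mulVec, ← star_eq_conjTranspose, star_star, ← dotProduct_mulVec, mulVec_mulVec,
    mem_unitaryGroup_iff.1 hU, one_mulVec]

variable {A : Matrix ι ι 𝕜}

theorem IsHermitian.star_dotProduct_mulVec_eq_sum (hA : A.IsHermitian) (x : ι → 𝕜) :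
    star x ⬝ᵥ A *ᵥ x = ((∑ i, hA.eigenvalues i *
      ‖(star (hA.eigenvectorUnitary : Matrix ι ι 𝕜) *ᵥ x) i‖ ^ 2 : ℝ) : 𝕜) := by
  set y := star (hA.eigenvectorUnitary : Matrix ι ι 𝕜) *ᵥ x
  have : star x ⬝ᵥ A *ᵥ x = star y ⬝ᵥ diagonal (RCLike.ofReal ∘ hA.eigenvalues) *ᵥ y := by
    conv_lhs => rw [hA.spectral_theorem, Unitary.conjStarAlgAut_apply]
    rw [star_mulVec, ← star_eq_conjTranspose, star_star, ← dotProduct_mulVec, mul_assoc,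
      ← mulVec_mulVec, ← mulVec_mulVec]
  rw [this]
  push_cast
  refine Finset.sum_congr rfl fun i _ ↦ ?_
  rw [mulVec_diagonal, Pi.star_apply, RCLike.star_def, mul_left_comm, RCLike.conj_mul,
    Function.comp_apply]

theorem IsHermitian.re_star_dotProduct_mulVec_le (hA : A.IsHermitian) {S : Finset ι} {d : ℝ}
    (hd : ∀ i ∈ S, hA.eigenvalues i ≤ d) {x : ι → 𝕜}
    (hx : ∀ i ∉ S, (star (hA.eigenvectorUnitary : Matrix ι ι 𝕜) *ᵥ x) i = 0) :
    RCLike.re (star x ⬝ᵥ A *ᵥ x) ≤ d * RCLike.re (star x ⬝ᵥ x) := by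
  rw [hA.star_dotProduct_mulVec_eq_sum, ← star_dotProduct_self_star_mulVec
    hA.eigenvectorUnitary.2 x, star_dotProduct_self_eq_sum_norm_sq, RCLike.ofReal_re,
    RCLike.ofReal_re, Finset.mul_sum]
  refine Finset.sum_le_sum fun i _ ↦ ?_
  by_cases hi : i ∈ S
  · exact mul_le_mul_of_nonneg_right (hd i hi) (sq_nonneg _)
  · simp [hx i hi]

theorem IsHermitian.le_re_star_dotProduct_mulVec (hA : A.IsHermitian) {T : Finset ι} {c : ℝ}
    (hc : ∀ i ∈ T, c ≤ hA.eigenvalues i) {x : ι → 𝕜}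
    (hx : ∀ i ∉ T, (star (hA.eigenvectorUnitary : Matrix ι ι 𝕜) *ᵥ x) i = 0) :
    c * RCLike.re (star x ⬝ᵥ x) ≤ RCLike.re (star x ⬝ᵥ A *ᵥ x) := by
  rw [hA.star_dotProduct_mulVec_eq_sum, ← star_dotProduct_self_star_mulVec
    hA.eigenvectorUnitary.2 x, star_dotProduct_self_eq_sum_norm_sq, RCLike.ofReal_re,
    RCLike.ofReal_re, Finset.mul_sum]
  refine Finset.sum_le_sum fun i _ ↦ ?_
  by_cases hi : i ∈ T
  · exact mul_le_mul_of_nonneg_right (hc i hi) (sq_nonneg _)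
  · simp [hx i hi]

theorem IsHermitian.le_of_card_lt_card_add_card {B : Matrix ι ι 𝕜} (hA : A.IsHermitian)
    (hB : B.IsHermitian) (hBA : (A - B).PosSemidef) {S T : Finset ι}
    (hST : Fintype.card ι < S.card + T.card) {c d : ℝ} (hd : ∀ i ∈ S, hA.eigenvalues i ≤ d)
    (hc : ∀ i ∈ T, c ≤ hB.eigenvalues i) : c ≤ d := by
  obtain ⟨x, hx0, hxS, hxT⟩ := exists_ne_zero_mulVec_apply_eq_zero_of_notMem
    (star (hA.eigenvectorUnitary : Matrix ι ι 𝕜)) (star (hB.eigenvectorUnitary : Matrix ι ι 𝕜)) hST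
  have hx : 0 < RCLike.re (star x ⬝ᵥ x) :=
    (RCLike.pos_iff.1 (dotProduct_star_self_pos_iff.2 hx0)).1
  have hBA_x : RCLike.re (star x ⬝ᵥ B *ᵥ x) ≤ RCLike.re (star x ⬝ᵥ A *ᵥ x) := by
    have := (RCLike.nonneg_iff.1 (hBA.dotProduct_mulVec_nonneg x)).1
    rwa [sub_mulVec, dotProduct_sub, map_sub, sub_nonneg] at this
  refine le_of_mul_le_mul_right ?_ hx
  linarith [hA.re_star_dotProduct_mulVec_le hd hxS, hB.le_re_star_dotProduct_mulVec hc hxT]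

end Matrix

theorem Matrix.IsHermitian.eigenvalues_sort_le {𝕜 : Type*} [RCLike 𝕜] {n : ℕ}
    {A B : Matrix (Fin n) (Fin n) 𝕜} (hA : A.IsHermitian) (hB : B.IsHermitian)
    (hBA : (A - B).PosSemidef) (k : Fin n) :
    hB.eigenvalues (Tuple.sort hB.eigenvalues k) ≤ hA.eigenvalues (Tuple.sort hA.eigenvalues k) := by
  refine hA.le_of_card_lt_card_add_card hB hBA
    (S := (Finset.Iic k).map (Tuple.sort hA.eigenvalues).toEmbedding)
    (T := (Finset.Ici k).map (Tuple.sort hB.eigenvalues).toEmbedding) ?_ ?_ ?_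
  · simp only [Finset.card_map, Fin.card_Iic, Fin.card_Ici, Fintype.card_fin]
    omega
  · simp only [Finset.mem_map_equiv, Finset.mem_Iic]
    intro i hi
    simpa using Tuple.monotone_sort hA.eigenvalues hi
  · simp only [Finset.mem_map_equiv, Finset.mem_Ici]
    intro i hi
    simpa using Tuple.monotone_sort hB.eigenvalues hi

theorem Seminorm.IsUnitarilyInvariant.map_matFun {ι : Type*} [Fintype ι] [DecidableEq ι]
    {p : Seminorm ℂ (Matrix ι ι ℂ)} (hp : p.IsUnitarilyInvariant) (f : ℝ → ℝ)
    {X : Matrix ι ι ℂ} (hX : X.IsHermitian) :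
    p (matFun f X) = p (diagonal fun i ↦ (f (hX.eigenvalues i) : ℂ)) := by
  rw [matFun, dif_pos hX]
  exact hp.map_conj_star _ hX.eigenvectorUnitary.2

theorem norm_matFun_mono {n : ℕ} (A B : Matrix (Fin n) (Fin n) ℂ)
    (hA : A.PosSemidef) (hB : B.PosSemidef) (hBA : (A - B).PosSemidef)
    (f : ℝ → ℝ) (hf : ConcaveOn ℝ (Set.Ici 0) f) (hf0 : ∀ x : ℝ, 0 ≤ x → 0 ≤ f x)
    (N : Matrix (Fin n) (Fin n) ℂ → ℝ)
    (hadd : ∀ X Y, N (X + Y) ≤ N X + N Y)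
    (hsmul : ∀ (c : ℂ) X, N (c • X) = ‖c‖ * N X)
    (hui : ∀ X, ∀ U ∈ Matrix.unitaryGroup (Fin n) ℂ, ∀ V ∈ Matrix.unitaryGroup (Fin n) ℂ,
      N (U * X * V) = N X) :
    N (matFun f B) ≤ N (matFun f A) := by
  let p : Seminorm ℂ (Matrix (Fin n) (Fin n) ℂ) := Seminorm.of N hadd hsmul
  have hp : p.IsUnitarilyInvariant := hui
  change p (matFun f B) ≤ p (matFun f A)
  rw [hp.map_matFun f hB.1, hp.map_matFun f hA.1,
    ← hp.map_diagonal_comp_perm _ (Tuple.sort hB.1.eigenvalues),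
    ← hp.map_diagonal_comp_perm (fun i ↦ (f (hA.1.eigenvalues i) : ℂ))
      (Tuple.sort hA.1.eigenvalues)]
  refine hp.map_diagonal_le_of_abs_le fun k ↦ ?_
  rw [abs_of_nonneg (hf0 _ (hB.eigenvalues_nonneg _))]
  exact hf.monotoneOn_of_nonneg hf0 (hB.eigenvalues_nonneg _) (hA.eigenvalues_nonneg _)
    (hA.1.eigenvalues_sort_le hB.1 hBA k)
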